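/- arXiv:1008.1968 — 5 statements merged into one kernel-verified Lean document; each statement's English description precedes it below -/
import Mathlib

section
/- Let 0 < ε ≤ 1/2. Suppose there exists a positive integer n(ε) such that for all n > n(ε), (1−ε)·2C₂ f(n) n/log²n ≤ R(2n) ≤ (1+ε)·2C₂ f(n) n/log²n. Then there exists a constant m(ε) such that for all m > m(ε), (1−2ε)·2C₂ J(m) m/log²m ≤ a(2m) ≤ (1+11ε)·2C₂ J(m) m/log²m. -/
/-!
Since `R` vanishes at odd numbers, `a (2m) = ∑_{d ∣ m} R (2d)`. Split the divisors of `m` at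
`T = m^(1-δ)` with `δ = ε/4`. For `d > T` the hypothesis applies to `R (2d)` and
`(1-δ) log m ≤ log d ≤ log m`, so these terms are `(1 + O(ε)) 2C₂ f(d) d / log² m`; since
`d ↦ f(d) d` is multiplicative, `∑_{d ∣ m} f(d) d = J(m) m`. There are only
`τ(m) = O(m^(δ/2))` divisors `d ≤ T`, so both their share of this sum and their terms
`R (2d) ≤ 2d` are `o(J(m) m / log² m)`. Positivity of `C₂` follows from the upper bound
and `R (2p) ≥ 1`.
-/

/-- `R n` is the number of ordered pairs `(p, q)` of odd primes with `p + q = n`. -/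
noncomputable def R (n : ℕ) : ℕ :=
  {pq : ℕ × ℕ | pq.1.Prime ∧ Odd pq.1 ∧ pq.2.Prime ∧ Odd pq.2 ∧ pq.1 + pq.2 = n}.ncard

/-- `a m = ∑_{d ∣ m} R d`. -/
noncomputable def a (m : ℕ) : ℕ := ∑ d ∈ m.divisors, R d

/-- `f n = ∏_{p ∣ n, p > 2} (p - 1)/(p - 2)`. -/
noncomputable def f (n : ℕ) : ℝ :=
  ∏ p ∈ n.primeFactors.filter (fun p => 2 < p), ((p : ℝ) - 1) / ((p : ℝ) - 2)

/-- The twin primes constant `C₂ = ∏_{p > 2} (1 - 1/(p-1)²)`. -/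
noncomputable def C₂ : ℝ :=
  ∏' p : {p : ℕ // p.Prime ∧ 2 < p}, (1 - 1 / ((p.1 : ℝ) - 1) ^ 2)

/-- `J m = (2 - 1/2^k) ∏_{p^ℓ ∥ m, p > 2} (1 - 2/p^{ℓ+1})(1 - 2/p)⁻¹`
where `2^k ∥ m`. -/
noncomputable def J (m : ℕ) : ℝ :=
  (2 - 1 / 2 ^ (m.factorization 2)) *
    ∏ p ∈ m.primeFactors.filter (fun p => 2 < p),
      (1 - 2 / (p : ℝ) ^ (m.factorization p + 1)) * (1 - 2 / (p : ℝ))⁻¹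

open Finset Real Filter Asymptotics

lemma R_le_self (n : ℕ) : R n ≤ n := by
  calc R n ≤ (Set.Iio n).ncard := by
        refine Set.ncard_le_ncard_of_injOn Prod.fst ?_ ?_ (Set.finite_Iio n)
        · rintro ⟨p, q⟩ ⟨-, -, hq, -, rfl⟩
          simpa using hq.pos
        · rintro ⟨p, q⟩ ⟨-, -, -, -, h⟩ ⟨p', q'⟩ ⟨-, -, -, -, h'⟩ (rfl : p = p')
          congr 1
          omega
    _ = n := by simp

lemma even_of_R_ne_zero {n : ℕ} (h : R n ≠ 0) : Even n := by
  obtain ⟨⟨p, q⟩, -, hp, -, hq, rfl⟩ := Set.nonempty_of_ncard_ne_zero h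
  exact hp.add_odd hq

lemma one_le_R_two_mul_of_prime {p : ℕ} (hp : p.Prime) (hodd : Odd p) : 1 ≤ R (2 * p) := by
  have hfin : {pq : ℕ × ℕ | pq.1.Prime ∧ Odd pq.1 ∧ pq.2.Prime ∧ Odd pq.2 ∧
      pq.1 + pq.2 = 2 * p}.Finite :=
    ((Set.finite_Iic (2 * p)).prod (Set.finite_Iic (2 * p))).subset <| by
      rintro ⟨q, r⟩ ⟨-, -, -, -, h⟩
      simp only [Set.mem_prod, Set.mem_Iic]
      omega
  exact (Set.ncard_pos hfin).2 ⟨(p, p), hp, hodd, hp, hodd, by ring⟩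

lemma a_two_mul (m : ℕ) : a (2 * m) = ∑ d ∈ m.divisors, R (2 * d) := by
  have hEven : (2 * m).divisors.filter Even = m.divisors.image (2 * ·) := by
    ext d
    simp only [mem_filter, Nat.mem_divisors, mem_image]
    constructor
    · rintro ⟨⟨hd, hm⟩, ⟨e, rfl⟩⟩
      rw [← two_mul] at hd ⊢
      exact ⟨e, ⟨(mul_dvd_mul_iff_left two_ne_zero).1 hd, by omega⟩, rfl⟩
    · rintro ⟨e, ⟨he, hm⟩, rfl⟩
      exact ⟨⟨mul_dvd_mul_left 2 he, by omega⟩, even_two_mul e⟩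
  rw [a, ← sum_filter_of_ne fun d _ => even_of_R_ne_zero, hEven,
    sum_image fun x _ y _ h => by simpa using h]

lemma one_le_sub_one_div_sub_two {x : ℝ} (hx : 2 < x) : 1 ≤ (x - 1) / (x - 2) := by
  rw [one_le_div (by linarith)]
  linarith

lemma one_le_f (n : ℕ) : 1 ≤ f n :=
  one_le_prod fun p hp => one_le_sub_one_div_sub_two (by exact_mod_cast (mem_filter.1 hp).2)

lemma f_nonneg (n : ℕ) : 0 ≤ f n := zero_le_one.trans (one_le_f n)

lemma f_le_f_of_dvd {d m : ℕ} (hd : d ∣ m) (hm : m ≠ 0) : f d ≤ f m :=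
  prod_le_prod_of_subset_of_one_le (filter_subset_filter _ (Nat.primeFactors_mono hd hm))
    (fun p hp => zero_le_one.trans
      (one_le_sub_one_div_sub_two (by exact_mod_cast (mem_filter.1 hp).2)))
    (fun p hp _ => one_le_sub_one_div_sub_two (by exact_mod_cast (mem_filter.1 hp).2))

lemma f_one : f 1 = 1 := by simp [f]

lemma f_mul_of_coprime {m n : ℕ} (h : m.Coprime n) : f (m * n) = f m * f n := by
  rw [f, f, f, h.primeFactors_mul, filter_union,
    prod_union (disjoint_filter_filter h.disjoint_primeFactors)]

lemma f_prime_pow_succ {p : ℕ} (hp : p.Prime) (k : ℕ) :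
    f (p ^ (k + 1)) = if p = 2 then 1 else ((p : ℝ) - 1) / ((p : ℝ) - 2) := by
  rw [f, Nat.primeFactors_prime_pow k.succ_ne_zero hp, filter_singleton]
  rcases eq_or_ne p 2 with rfl | h2
  · simp
  · rw [if_pos (hp.two_le.lt_of_ne' h2), prod_singleton, if_neg h2]

noncomputable def fMulId : ArithmeticFunction ℝ := ⟨fun n => f n * n, by simp⟩

lemma fMulId_apply (n : ℕ) : fMulId n = f n * n := rfl

lemma isMultiplicative_fMulId : fMulId.IsMultiplicative := by
  refine ⟨by simp [fMulId_apply, f_one], fun {m n} h => ?_⟩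
  simp only [fMulId_apply, f_mul_of_coprime h, Nat.cast_mul]
  ring

noncomputable def Jlocal (p k : ℕ) : ℝ :=
  if p = 2 then 2 - 1 / 2 ^ k else (1 - 2 / (p : ℝ) ^ (k + 1)) * (1 - 2 / (p : ℝ))⁻¹

lemma sum_f_prime_pow_mul {p : ℕ} (hp : p.Prime) (k : ℕ) :
    ∑ j ∈ range (k + 1), f (p ^ j) * (p : ℝ) ^ j = Jlocal p k * (p : ℝ) ^ k := by
  induction k with
  | zero =>
    simp only [zero_add, range_one, sum_singleton, pow_zero, f_one, mul_one, Jlocal]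
    split_ifs with h2
    · norm_num
    · have hp3 : (3 : ℝ) ≤ p := by exact_mod_cast (hp.two_le.lt_of_ne' h2)
      have : (p : ℝ) - 2 ≠ 0 := by linarith
      field_simp
  | succ k ih =>
    rw [sum_range_succ, ih, f_prime_pow_succ hp, Jlocal, Jlocal]
    split_ifs with h2
    · subst h2
      field_simp
      ring
    · have hp3 : (3 : ℝ) ≤ p := by exact_mod_cast (hp.two_le.lt_of_ne' h2)
      have : (p : ℝ) - 2 ≠ 0 := by linarith
      field_simp
      ring

lemma J_eq_prod_Jlocal (m : ℕ) :
    J m = ∏ p ∈ m.primeFactors, Jlocal p (m.factorization p) := by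
  rw [← prod_filter_mul_prod_filter_not m.primeFactors (· = 2), J]
  congr 1
  · rw [filter_eq']
    split_ifs with h2
    · simp [Jlocal]
    · rw [← Nat.support_factorization, Finsupp.notMem_support_iff] at h2
      norm_num [h2]
  · rw [filter_congr (p := fun p => 2 < p) (q := fun p => ¬p = 2) fun p hp => by
      have := (Nat.prime_of_mem_primeFactors hp).two_le
      omega]
    exact prod_congr rfl fun p hp => by rw [Jlocal, if_neg (mem_filter.1 hp).2]

open ArithmeticFunction ArithmeticFunction.zeta in
lemma sum_divisors_f_mul_self (m : ℕ) : ∑ d ∈ m.divisors, f d * d = J m * m := by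
  rcases eq_or_ne m 0 with rfl | hm
  · simp
  have hmult : ((↑ζ : ArithmeticFunction ℝ) * fMulId).IsMultiplicative :=
    isMultiplicative_zeta.natCast.mul isMultiplicative_fMulId
  have hm_prod : (m : ℝ) = ∏ p ∈ m.primeFactors, (p : ℝ) ^ m.factorization p := by
    exact_mod_cast Nat.prod_primeFactors_pow_factorization hm
  calc ∑ d ∈ m.divisors, f d * d = ((↑ζ : ArithmeticFunction ℝ) * fMulId) m :=
        (coe_zeta_mul_apply (f := fMulId)).symm
    _ = ∏ p ∈ m.primeFactors,
          ((↑ζ : ArithmeticFunction ℝ) * fMulId) (p ^ m.factorization p) := by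
        rw [hmult.multiplicative_factorization _ hm, Nat.prod_factorization_eq_prod_primeFactors]
    _ = ∏ p ∈ m.primeFactors, Jlocal p (m.factorization p) * (p : ℝ) ^ m.factorization p :=
        prod_congr rfl fun p hp => by
          rw [coe_zeta_mul_apply, Nat.sum_divisors_prime_pow (Nat.prime_of_mem_primeFactors hp),
            ← sum_f_prime_pow_mul (Nat.prime_of_mem_primeFactors hp)]
          simp [fMulId_apply]
    _ = J m * m := by rw [prod_mul_distrib, ← J_eq_prod_Jlocal, ← hm_prod]

lemma f_le_J {m : ℕ} (hm : m ≠ 0) : f m ≤ J m := by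
  have h : f m * m ≤ J m * m := sum_divisors_f_mul_self m ▸
    single_le_sum (fun d _ => mul_nonneg (f_nonneg d) d.cast_nonneg)
      (Nat.mem_divisors_self m hm)
  exact le_of_mul_le_mul_right h (by positivity)

lemma one_le_J {m : ℕ} (hm : m ≠ 0) : 1 ≤ J m := (one_le_f m).trans (f_le_J hm)

lemma add_one_le_mul_pow {x : ℝ} (hx : 1 < x) (e : ℕ) :
    (e : ℝ) + 1 ≤ max 1 (x - 1)⁻¹ * x ^ e := by
  have hBernoulli : 1 + e * (x - 1) ≤ x ^ e := by
    simpa using one_add_mul_le_pow (a := x - 1) (by linarith) e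
  have hM : 1 ≤ max 1 (x - 1)⁻¹ := le_max_left _ _
  have hMx : 1 ≤ max 1 (x - 1)⁻¹ * (x - 1) := by
    rw [← div_le_iff₀ (by linarith), one_div]
    exact le_max_right _ _
  nlinarith [mul_le_mul_of_nonneg_left hBernoulli (zero_le_one.trans hM),
    mul_le_mul_of_nonneg_left hMx e.cast_nonneg]

/- `τ(m) = ∏ (e_p + 1)` and `e + 1 ≤ g p * (p ^ δ) ^ e`, where `g p = 1` as soon as
`p ^ δ ≥ 2`. -/
lemma exists_card_divisors_le_mul_rpow {δ : ℝ} (hδ : 0 < δ) :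
    ∃ C : ℝ, ∀ m : ℕ, m ≠ 0 → (m.divisors.card : ℝ) ≤ C * (m : ℝ) ^ δ := by
  set g : ℕ → ℝ := fun p => max 1 ((p : ℝ) ^ δ - 1)⁻¹
  set N := ⌈(2 : ℝ) ^ δ⁻¹⌉₊
  have hg_one : ∀ p, 1 ≤ g p := fun p => le_max_left _ _
  have hg_large : ∀ p, N ≤ p → g p = 1 := fun p hp => by
    have h2 : (2 : ℝ) ≤ (p : ℝ) ^ δ := by
      calc (2 : ℝ) = ((2 : ℝ) ^ δ⁻¹) ^ δ := by
            rw [← rpow_mul zero_le_two, inv_mul_cancel₀ hδ.ne', rpow_one]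
        _ ≤ (p : ℝ) ^ δ := by
          gcongr
          exact (Nat.le_ceil _).trans (by exact_mod_cast hp)
    exact max_eq_left (inv_le_one_of_one_le₀ (by linarith))
  refine ⟨∏ p ∈ range N, g p, fun m hm => ?_⟩
  have hm_pow :
      (m : ℝ) ^ δ = ∏ p ∈ m.primeFactors, ((p : ℝ) ^ δ) ^ m.factorization p := by
    have : (m : ℝ) = ∏ p ∈ m.primeFactors, (p : ℝ) ^ m.factorization p := by
      exact_mod_cast Nat.prod_primeFactors_pow_factorization hm
    rw [this, ← finsetProd_rpow _ _ fun p _ => by positivity]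
    exact prod_congr rfl fun p _ => (rpow_pow_comm p.cast_nonneg _ _).symm
  calc (m.divisors.card : ℝ) = ∏ p ∈ m.primeFactors, ((m.factorization p : ℝ) + 1) := by
        rw [Nat.card_divisors hm]
        push_cast
        rfl
    _ ≤ ∏ p ∈ m.primeFactors, g p * ((p : ℝ) ^ δ) ^ m.factorization p :=
        prod_le_prod (fun _ _ => by positivity) fun p hp => add_one_le_mul_pow
          (one_lt_rpow (by exact_mod_cast (Nat.prime_of_mem_primeFactors hp).one_lt) hδ) _
    _ = (∏ p ∈ m.primeFactors with p < N, g p) * (m : ℝ) ^ δ := by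
        rw [prod_mul_distrib, hm_pow, prod_filter_of_ne fun p _ hp => ?_]
        by_contra hN
        exact hp (hg_large p (not_lt.1 hN))
    _ ≤ (∏ p ∈ range N, g p) * (m : ℝ) ^ δ := by
        gcongr
        · exact fun p _ _ => hg_one p
        · exact fun p hp => mem_range.2 (mem_filter.1 hp).2

lemma isLittleO_card_divisors_mul_log_sq {δ : ℝ} (hδ : 0 < δ) :
    (fun m : ℕ => (m.divisors.card : ℝ) * log m ^ 2) =o[atTop] fun m => (m : ℝ) ^ δ := by
  obtain ⟨C, hC⟩ := exists_card_divisors_le_mul_rpow (half_pos hδ)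
  have hcard :
      (fun m : ℕ => (m.divisors.card : ℝ)) =O[atTop] fun m => (m : ℝ) ^ (δ / 2) := by
    refine IsBigO.of_bound C ?_
    filter_upwards [eventually_ne_atTop 0] with m hm
    rw [norm_of_nonneg (by positivity), norm_of_nonneg (by positivity)]
    exact hC m hm
  have hlog : (fun m : ℕ => log m ^ 2) =o[atTop] fun m => (m : ℝ) ^ (δ / 2) := by
    simpa [Function.comp_def] using (isLittleO_log_rpow_rpow_atTop 2 (half_pos hδ)).comp_tendsto
      tendsto_natCast_atTop_atTop
  refine (hcard.mul_isLittleO hlog).congr_right fun m => ?_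
  rw [← rpow_add' m.cast_nonneg (by linarith), add_halves]

noncomputable def divisorsUpTo (m : ℕ) (T : ℝ) : Finset ℕ :=
  {d ∈ m.divisors | (d : ℝ) ≤ T}

noncomputable def divisorsAbove (m : ℕ) (T : ℝ) : Finset ℕ :=
  {d ∈ m.divisors | T < d}

lemma sum_divisorsUpTo_add_sum_divisorsAbove {M : Type*} [AddCommMonoid M] (m : ℕ) (T : ℝ)
    (g : ℕ → M) :
    ∑ d ∈ divisorsUpTo m T, g d + ∑ d ∈ divisorsAbove m T, g d =
      ∑ d ∈ m.divisors, g d := by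
  simpa only [divisorsUpTo, divisorsAbove, not_le] using
    sum_filter_add_sum_filter_not m.divisors (fun d : ℕ => (d : ℝ) ≤ T) g

lemma eventually_sum_f_mul_small_divisors_le {δ c : ℝ} (hδ : 0 < δ) (hc : 0 < c) :
    ∀ᶠ m : ℕ in atTop,
      (∑ d ∈ divisorsUpTo m ((m : ℝ) ^ (1 - δ)), f d * d) * log m ^ 2 ≤ c * (J m * m) := by
  filter_upwards [(isLittleO_card_divisors_mul_log_sq hδ).bound hc, eventually_ne_atTop 0]
    with m hcard hm
  rw [norm_of_nonneg (by positivity), norm_of_nonneg (by positivity)] at hcard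
  have hJ : 0 ≤ J m := zero_le_one.trans (one_le_J hm)
  have hterm : ∀ d ∈ divisorsUpTo m ((m : ℝ) ^ (1 - δ)),
      f d * d ≤ J m * (m : ℝ) ^ (1 - δ) := fun d hd => by
    obtain ⟨hdm, hdT⟩ := mem_filter.1 hd
    exact mul_le_mul ((f_le_f_of_dvd (Nat.dvd_of_mem_divisors hdm) hm).trans (f_le_J hm)) hdT
      d.cast_nonneg hJ
  have hsum : ∑ d ∈ divisorsUpTo m ((m : ℝ) ^ (1 - δ)), f d * d
      ≤ m.divisors.card * (J m * (m : ℝ) ^ (1 - δ)) := by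
    refine (sum_le_card_nsmul _ _ _ hterm).trans ?_
    rw [nsmul_eq_mul]
    gcongr
    exact filter_subset _ _
  calc (∑ d ∈ divisorsUpTo m ((m : ℝ) ^ (1 - δ)), f d * d) * log m ^ 2
      ≤ (m.divisors.card * log m ^ 2) * (J m * (m : ℝ) ^ (1 - δ)) := by
        nlinarith [sq_nonneg (log m)]
    _ ≤ (c * (m : ℝ) ^ δ) * (J m * (m : ℝ) ^ (1 - δ)) := by gcongr
    _ = c * (J m * m) := by
        rw [mul_mul_mul_comm, ← rpow_add (by positivity), add_sub_cancel, rpow_one]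
        ring

lemma pos_of_R_two_mul_le {c : ℝ} {N : ℕ}
    (h : ∀ n : ℕ, N < n → (R (2 * n) : ℝ) ≤ c * f n * n / log n ^ 2) : 0 < c := by
  obtain ⟨p, hNp, hp⟩ := Nat.exists_infinite_primes (N + 3)
  have hR : (1 : ℝ) ≤ R (2 * p) := by
    exact_mod_cast one_le_R_two_mul_of_prime hp (hp.odd_of_ne_two (by omega))
  by_contra! hc
  have : c * f p * p / log p ^ 2 ≤ 0 :=
    div_nonpos_of_nonpos_of_nonneg
      (mul_nonpos_of_nonpos_of_nonneg
        (mul_nonpos_of_nonpos_of_nonneg hc (f_nonneg p)) p.cast_nonneg)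
      (sq_nonneg _)
  linarith [h p (by omega)]

lemma div_log_sq_le_div_log_sq {x y c : ℝ} (hc : 0 ≤ c) (hy : 1 < y) (hyx : y ≤ x) :
    c / log x ^ 2 ≤ c / log y ^ 2 := by
  have := log_pos hy
  gcongr

lemma div_log_sq_le_of_rpow_le {x y θ c : ℝ} (hc : 0 ≤ c) (hθ : 0 < θ) (hx : 1 < x)
    (hxy : x ^ θ ≤ y) : c / log y ^ 2 ≤ c / (θ ^ 2 * log x ^ 2) := by
  have hlog : θ * log x ≤ log y := by
    rw [← log_rpow (by linarith)]
    exact log_le_log (by positivity) hxy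
  have := mul_pos hθ (log_pos hx)
  rw [← mul_pow]
  gcongr

lemma le_a_two_mul {ε K T : ℝ} {N m : ℕ} (hε : ε ≤ 1) (hK : 0 ≤ K) (hm : 1 ≤ log m)
    (hT : (N : ℝ) + 1 ≤ T)
    (hsmall : (∑ d ∈ divisorsUpTo m T, f d * d) * log m ^ 2 ≤ ε * (J m * m))
    (hR : ∀ n : ℕ, N < n → (1 - ε) * K * f n * n / log n ^ 2 ≤ R (2 * n)) :
    (1 - 2 * ε) * K * J m * m / log m ^ 2 ≤ a (2 * m) := by
  have hm0 : m ≠ 0 := by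
    rintro rfl
    norm_num at hm
  set S := ∑ d ∈ divisorsUpTo m T, f d * d
  have hS0 : 0 ≤ S := sum_nonneg fun d _ => mul_nonneg (f_nonneg d) d.cast_nonneg
  have hS : S ≤ ε * (J m * m) := le_trans (le_mul_of_one_le_right hS0 (by nlinarith)) hsmall
  have hsplit := sum_divisors_f_mul_self m ▸
    sum_divisorsUpTo_add_sum_divisorsAbove m T fun d => f d * (d : ℝ)
  have hJm : 0 ≤ J m * m := mul_nonneg (zero_le_one.trans (one_le_J hm0)) m.cast_nonneg
  have hmain : (1 - 2 * ε) * (J m * m) ≤ (1 - ε) * (J m * m - S) := by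
    nlinarith [mul_le_mul_of_nonneg_left hS (sub_nonneg.2 hε), mul_nonneg (sq_nonneg ε) hJm]
  have hterm : ∀ d ∈ divisorsAbove m T,
      (1 - ε) * K / log m ^ 2 * (f d * d) ≤ R (2 * d) := fun d hd => by
    obtain ⟨hdm, hTd⟩ := mem_filter.1 hd
    have hNd : (N : ℝ) + 1 < d := hT.trans_lt hTd
    calc (1 - ε) * K / log m ^ 2 * (f d * d) = (1 - ε) * K * f d * d / log m ^ 2 := by ring
      _ ≤ (1 - ε) * K * f d * d / log d ^ 2 :=
        div_log_sq_le_div_log_sq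
          (mul_nonneg (mul_nonneg (mul_nonneg (sub_nonneg.2 hε) hK) (f_nonneg d)) d.cast_nonneg)
          (by linarith [N.cast_nonneg (α := ℝ)]) (by exact_mod_cast Nat.divisor_le hdm)
      _ ≤ R (2 * d) := hR d (by exact_mod_cast (by linarith : (N : ℝ) < d))
  calc (1 - 2 * ε) * K * J m * m / log m ^ 2
      = K / log m ^ 2 * ((1 - 2 * ε) * (J m * m)) := by ring
    _ ≤ K / log m ^ 2 * ((1 - ε) * (J m * m - S)) := by gcongr
    _ = ∑ d ∈ divisorsAbove m T, (1 - ε) * K / log m ^ 2 * (f d * d) := by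
        rw [← mul_sum, ← hsplit]
        ring
    _ ≤ ∑ d ∈ divisorsAbove m T, (R (2 * d) : ℝ) := sum_le_sum hterm
    _ ≤ ∑ d ∈ m.divisors, (R (2 * d) : ℝ) :=
        sum_le_sum_of_subset_of_nonneg (filter_subset _ _) fun _ _ _ => Nat.cast_nonneg _
    _ = a (2 * m) := by rw [a_two_mul]; push_cast; rfl

lemma R_two_mul_le_two_mul_f_mul_self (d : ℕ) : (R (2 * d) : ℝ) ≤ 2 * (f d * d) := by
  have : (R (2 * d) : ℝ) ≤ 2 * d := by exact_mod_cast R_le_self (2 * d)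
  nlinarith [one_le_f d, d.cast_nonneg (α := ℝ)]

lemma a_two_mul_le {ε K θ : ℝ} {N m : ℕ} (hε : 0 ≤ ε) (hK : 0 ≤ K) (hθ : 0 < θ)
    (hm : 0 < log m) (hT : (N : ℝ) + 1 ≤ (m : ℝ) ^ θ)
    (hsmall :
      (∑ d ∈ divisorsUpTo m ((m : ℝ) ^ θ), f d * d) * log m ^ 2 ≤ ε * K / 2 * (J m * m))
    (hR : ∀ n : ℕ, N < n → (R (2 * n) : ℝ) ≤ (1 + ε) * K * f n * n / log n ^ 2) :
    (a (2 * m) : ℝ) ≤ (ε + (1 + ε) / θ ^ 2) * K * J m * m / log m ^ 2 := by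
  set T := (m : ℝ) ^ θ
  have hm1 : 1 < (m : ℝ) := (log_pos_iff m.cast_nonneg).1 hm
  have hsplit_f := sum_divisors_f_mul_self m ▸
    sum_divisorsUpTo_add_sum_divisorsAbove m T fun d => f d * (d : ℝ)
  have hsmall_f : 0 ≤ ∑ d ∈ divisorsUpTo m T, f d * d :=
    sum_nonneg fun d _ => mul_nonneg (f_nonneg d) d.cast_nonneg
  have hsmall_R :
      ∑ d ∈ divisorsUpTo m T, (R (2 * d) : ℝ) ≤ ε * K * (J m * m) / log m ^ 2 := by
    rw [le_div_iff₀ (by positivity)]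
    calc (∑ d ∈ divisorsUpTo m T, (R (2 * d) : ℝ)) * log m ^ 2
        ≤ (∑ d ∈ divisorsUpTo m T, 2 * (f d * d)) * log m ^ 2 := by
          gcongr with d
          exact R_two_mul_le_two_mul_f_mul_self d
      _ ≤ ε * K * (J m * m) := by rw [← mul_sum]; linarith
  have hbig_R : ∑ d ∈ divisorsAbove m T, (R (2 * d) : ℝ)
      ≤ (1 + ε) * K / (θ ^ 2 * log m ^ 2) * (J m * m) := by
    calc ∑ d ∈ divisorsAbove m T, (R (2 * d) : ℝ)
        ≤ ∑ d ∈ divisorsAbove m T, (1 + ε) * K / (θ ^ 2 * log m ^ 2) * (f d * d) := by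
          refine sum_le_sum fun d hd => ?_
          obtain ⟨-, hTd⟩ := mem_filter.1 hd
          calc (R (2 * d) : ℝ) ≤ (1 + ε) * K * f d * d / log d ^ 2 :=
                hR d (by exact_mod_cast (by linarith : (N : ℝ) < d))
            _ ≤ (1 + ε) * K * f d * d / (θ ^ 2 * log m ^ 2) :=
                div_log_sq_le_of_rpow_le (by have := f_nonneg d; positivity) hθ hm1 hTd.le
            _ = (1 + ε) * K / (θ ^ 2 * log m ^ 2) * (f d * d) := by ring
      _ = (1 + ε) * K / (θ ^ 2 * log m ^ 2) * ∑ d ∈ divisorsAbove m T, f d * d :=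
          (mul_sum _ _ _).symm
      _ ≤ (1 + ε) * K / (θ ^ 2 * log m ^ 2) * (J m * m) := by gcongr; linarith
  calc (a (2 * m) : ℝ) = ∑ d ∈ m.divisors, (R (2 * d) : ℝ) := by
        rw [a_two_mul]; push_cast; rfl
    _ ≤ ε * K * (J m * m) / log m ^ 2 + (1 + ε) * K / (θ ^ 2 * log m ^ 2) * (J m * m) := by
        rw [← sum_divisorsUpTo_add_sum_divisorsAbove m T]
        exact add_le_add hsmall_R hbig_R
    _ = (ε + (1 + ε) / θ ^ 2) * K * J m * m / log m ^ 2 := by ring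

theorem a_bounds_of_epsilon_HL_general (ε : ℝ) (hε0 : 0 < ε) (hε : ε ≤ 1 / 2)
    (nε : ℕ)
    (hHL : ∀ n : ℕ, nε < n →
      (1 - ε) * (2 * C₂) * f n * n / Real.log n ^ 2 ≤ (R (2 * n) : ℝ) ∧
      (R (2 * n) : ℝ) ≤ (1 + ε) * (2 * C₂) * f n * n / Real.log n ^ 2) :
    ∃ mε : ℕ, ∀ m : ℕ, mε < m →
      (1 - 2 * ε) * (2 * C₂) * J m * m / Real.log m ^ 2 ≤ (a (2 * m) : ℝ) ∧
      (a (2 * m) : ℝ) ≤ (1 + 11 * ε) * (2 * C₂) * J m * m / Real.log m ^ 2 := by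
  have hK : 0 < 2 * C₂ :=
    pos_of_mul_pos_right (pos_of_R_two_mul_le fun n hn => (hHL n hn).2) (by linarith)
  have hT : ∀ᶠ m : ℕ in atTop, (nε : ℝ) + 1 ≤ (m : ℝ) ^ (1 - ε / 4) :=
    ((tendsto_rpow_atTop (by linarith)).comp tendsto_natCast_atTop_atTop).eventually_ge_atTop _
  have hlog : ∀ᶠ m : ℕ in atTop, 1 ≤ log m :=
    (tendsto_log_atTop.comp tendsto_natCast_atTop_atTop).eventually_ge_atTop 1
  obtain ⟨mε, hmε⟩ := eventually_atTop.1 <| hT.and <| hlog.and <|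
    (eventually_sum_f_mul_small_divisors_le (δ := ε / 4) (by linarith) hε0).and
      (eventually_sum_f_mul_small_divisors_le (δ := ε / 4) (by linarith)
        (by positivity : 0 < ε * (2 * C₂) / 2))
  refine ⟨mε, fun m hm => ?_⟩
  obtain ⟨hTm, hlogm, hsmall, hsmall'⟩ := hmε m hm.le
  have hJ : 0 ≤ J m := zero_le_one.trans (one_le_J (by rintro rfl; norm_num at hlogm))
  have hcoef : ε + (1 + ε) / (1 - ε / 4) ^ 2 ≤ 1 + 11 * ε := by
    have : (1 + ε) / (1 - ε / 4) ^ 2 ≤ 1 + 10 * ε := by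
      rw [div_le_iff₀ (by nlinarith)]
      nlinarith [mul_nonneg hε0.le (by linarith : (0 : ℝ) ≤ 1 / 2 - ε), pow_nonneg hε0.le 3]
    linarith
  refine ⟨le_a_two_mul (by linarith) hK.le hlogm hTm hsmall fun n hn => (hHL n hn).1, ?_⟩
  calc (a (2 * m) : ℝ)
        ≤ (ε + (1 + ε) / (1 - ε / 4) ^ 2) * (2 * C₂) * J m * m / log m ^ 2 :=
        a_two_mul_le hε0.le hK.le (by linarith) (by linarith) hTm hsmall' fun n hn => (hHL n hn).2
    _ ≤ (1 + 11 * ε) * (2 * C₂) * J m * m / log m ^ 2 := by gcongr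

theorem a_bounds_of_epsilon_HL (ε : ℝ) (hε0 : 0 < ε) (hε : ε ≤ 1 / 2)
    (nε : ℕ) (hnε : 0 < nε)
    (hHL : ∀ n : ℕ, nε < n →
      (1 - ε) * (2 * C₂) * f n * n / Real.log n ^ 2 ≤ (R (2 * n) : ℝ) ∧
      (R (2 * n) : ℝ) ≤ (1 + ε) * (2 * C₂) * f n * n / Real.log n ^ 2) :
    ∃ mε : ℕ, ∀ m : ℕ, mε < m →
      (1 - 2 * ε) * (2 * C₂) * J m * m / Real.log m ^ 2 ≤ (a (2 * m) : ℝ) ∧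
      (a (2 * m) : ℝ) ≤ (1 + 11 * ε) * (2 * C₂) * J m * m / Real.log m ^ 2 :=
  a_bounds_of_epsilon_HL_general ε hε0 hε nε hHL
end

section
/- For every positive integer N, the Nth cyclotomic polynomial Φ_N(z) divides F_N(z) in ℤ[z] if and only if N has no representation as a sum of two odd primes (i.e., R(N) = 0). -/
/-- `F N = ∑_{k=0}^{N-1} ( ∑_{n=1}^{N-1} χ_P(n) z^{kn} )²`, where `χ_P` is the
indicator function of the odd primes. -/
noncomputable def F (N : ℕ) : Polynomial ℤ :=
  ∑ k ∈ Finset.range N,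
    (∑ n ∈ Finset.range N,
      if n.Prime ∧ Odd n then (Polynomial.X : Polynomial ℤ) ^ (k * n) else 0) ^ 2

open Polynomial Finset

theorem IsPrimitiveRoot.sum_range_pow_mul {A : Type*} [CommRing A] [IsDomain A] {ζ : A} {N : ℕ}
    (hζ : IsPrimitiveRoot ζ N) (m : ℕ) :
    ∑ k ∈ range N, ζ ^ (k * m) = if N ∣ m then (N : A) else 0 := by
  simp_rw [mul_comm _ m, pow_mul]
  split_ifs with hm
  · simp [(hζ.pow_eq_one_iff_dvd m).mpr hm]
  · have hne : ζ ^ m - 1 ≠ 0 := sub_ne_zero.mpr fun h => hm ((hζ.pow_eq_one_iff_dvd m).mp h)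
    have hpow : (ζ ^ m) ^ N = 1 := by rw [← pow_mul, mul_comm, pow_mul, hζ.pow_eq_one, one_pow]
    have hgeom := geom_sum_mul (ζ ^ m) N
    rw [hpow, sub_self] at hgeom
    exact (mul_eq_zero.mp hgeom).resolve_right hne

theorem Polynomial.cyclotomic_dvd_iff_aeval_eq_zero {K : Type*} [Field K] [CharZero K] {ζ : K}
    {N : ℕ} (hN : 0 < N) (hζ : IsPrimitiveRoot ζ N) (P : ℤ[X]) :
    cyclotomic N ℤ ∣ P ↔ aeval ζ P = 0 := by
  rw [cyclotomic_eq_minpoly hζ hN, minpoly.isIntegrallyClosed_dvd_iff (hζ.isIntegral hN)]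

theorem Finset.sum_pow_mul_sq {A : Type*} [CommSemiring A] (x : A) (S : Finset ℕ) (k : ℕ) :
    (∑ n ∈ S, x ^ (k * n)) ^ 2 = ∑ pq ∈ S ×ˢ S, x ^ (k * (pq.1 + pq.2)) := by
  simp_rw [sq, sum_mul_sum, ← pow_add, ← mul_add, sum_product]

def oddPrimesBelow (N : ℕ) : Finset ℕ := {n ∈ range N | n.Prime ∧ Odd n}

theorem F_eq_sum_oddPrimesBelow (N : ℕ) :
    F N = ∑ k ∈ range N, (∑ n ∈ oddPrimesBelow N, (X : ℤ[X]) ^ (k * n)) ^ 2 := by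
  simp only [F, oddPrimesBelow, sum_filter]

theorem R_eq_card_oddPrimesBelow (N : ℕ) :
    R N = #{pq ∈ oddPrimesBelow N ×ˢ oddPrimesBelow N | pq.1 + pq.2 = N} := by
  rw [R, ← Set.ncard_coe_finset]
  congr 1
  ext ⟨p, q⟩
  simp only [oddPrimesBelow, coe_filter, mem_product, mem_filter, mem_range, Set.mem_ofPred_eq]
  constructor
  · rintro ⟨hp, hpo, hq, hqo, rfl⟩
    have := hp.two_le
    have := hq.two_le
    exact ⟨⟨⟨by omega, hp, hpo⟩, ⟨by omega, hq, hqo⟩⟩, rfl⟩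
  · rintro ⟨⟨⟨-, hp, hpo⟩, ⟨-, hq, hqo⟩⟩, rfl⟩
    exact ⟨hp, hpo, hq, hqo, rfl⟩

theorem Nat.dvd_iff_eq_of_lt_two_mul {a b : ℕ} (ha : a ≠ 0) (hab : a < 2 * b) : b ∣ a ↔ a = b :=
  ⟨fun h => Nat.eq_of_dvd_of_lt_two_mul ha h hab, fun h => h ▸ dvd_rfl⟩

theorem aeval_F {A : Type*} [CommRing A] [IsDomain A] {ζ : A} {N : ℕ}
    (hζ : IsPrimitiveRoot ζ N) : aeval ζ (F N) = N * R N := by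
  have hdvd : ∀ pq ∈ oddPrimesBelow N ×ˢ oddPrimesBelow N, N ∣ pq.1 + pq.2 ↔ pq.1 + pq.2 = N := by
    simp only [oddPrimesBelow, mem_product, mem_filter, mem_range]
    rintro ⟨p, q⟩ ⟨⟨hp, hpp, -⟩, ⟨hq, -⟩⟩
    have := hpp.two_le
    exact Nat.dvd_iff_eq_of_lt_two_mul (by omega) (by omega)
  calc aeval ζ (F N)
      = ∑ pq ∈ oddPrimesBelow N ×ˢ oddPrimesBelow N, ∑ k ∈ range N, ζ ^ (k * (pq.1 + pq.2)) := by
        simp only [F_eq_sum_oddPrimesBelow, map_sum, map_pow, aeval_X, sum_pow_mul_sq]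
        exact sum_comm
    _ = ∑ pq ∈ oddPrimesBelow N ×ˢ oddPrimesBelow N, if pq.1 + pq.2 = N then (N : A) else 0 := by
        refine sum_congr rfl fun pq hpq => ?_
        rw [hζ.sum_range_pow_mul, if_congr (hdvd pq hpq) rfl rfl]
    _ = N * R N := by
        rw [← sum_filter, sum_const, R_eq_card_oddPrimesBelow, nsmul_eq_mul, mul_comm]

theorem cyclotomic_dvd_F_iff (N : ℕ) (hN : 0 < N) :
    Polynomial.cyclotomic N ℤ ∣ F N ↔ R N = 0 := by
  have hζ := Complex.isPrimitiveRoot_exp N hN.ne'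
  rw [cyclotomic_dvd_iff_aeval_eq_zero hN hζ, aeval_F hζ]
  simp [hN.ne']
end

section
/- For every positive integer N, the cyclotomic polynomial Φ_{4N}(z) divides F_{2N}(z) in ℤ[z]. -/
open Polynomial Finset

theorem geom_sum_eq_zero_of_pow_eq_one {R : Type*} [CommRing R] [IsDomain R] {x : R} {n : ℕ}
    (hx : x ≠ 1) (hxn : x ^ n = 1) : ∑ i ∈ range n, x ^ i = 0 :=
  eq_zero_of_ne_zero_of_mul_left_eq_zero (sub_ne_zero_of_ne hx.symm)
    (by rw [mul_neg_geom_sum, hxn, sub_self])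

namespace IsPrimitiveRoot

variable {R : Type*} [CommRing R] [IsDomain R] {ζ : R} {M : ℕ}

theorem sum_range_pow_mul_eq_zero (hζ : IsPrimitiveRoot ζ (2 * M)) {j : ℕ} (hj : Even j)
    (hjM : ¬ 2 * M ∣ j) : ∑ k ∈ range M, ζ ^ (k * j) = 0 := by
  obtain ⟨t, rfl⟩ := hj
  have hne : ζ ^ (t + t) ≠ 1 := fun h => hjM ((hζ.pow_eq_one_iff_dvd _).mp h)
  have hpow : (ζ ^ (t + t)) ^ M = 1 := by
    rw [← pow_mul, show (t + t) * M = 2 * M * t by ring, pow_mul, hζ.pow_eq_one, one_pow]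
  simpa only [mul_comm _ (t + t), pow_mul] using geom_sum_eq_zero_of_pow_eq_one hne hpow

theorem sum_range_sq_sum_pow_eq_zero (hζ : IsPrimitiveRoot ζ (2 * M)) {S : Finset ℕ}
    (hS : ∀ n ∈ S, Odd n ∧ n < M) : ∑ k ∈ range M, (∑ n ∈ S, ζ ^ (k * n)) ^ 2 = 0 := by
  calc ∑ k ∈ range M, (∑ n ∈ S, ζ ^ (k * n)) ^ 2
      = ∑ k ∈ range M, ∑ m ∈ S, ∑ n ∈ S, ζ ^ (k * (m + n)) := by
        simp only [sq, sum_mul_sum, mul_add, pow_add]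
    _ = ∑ m ∈ S, ∑ n ∈ S, ∑ k ∈ range M, ζ ^ (k * (m + n)) := by
        rw [sum_comm]
        exact sum_congr rfl fun _ _ => sum_comm
    _ = 0 := by
        refine sum_eq_zero fun m hm => sum_eq_zero fun n hn => ?_
        obtain ⟨hm_odd, hmM⟩ := hS m hm
        obtain ⟨hn_odd, hnM⟩ := hS n hn
        exact hζ.sum_range_pow_mul_eq_zero (hm_odd.add_odd hn_odd)
          (Nat.not_dvd_of_pos_of_lt (by have := hm_odd.pos; omega) (by omega))

end IsPrimitiveRoot

theorem cyclotomic_dvd_of_aeval_eq_zero {K : Type*} [Field K] [CharZero K] {n : ℕ} {ζ : K}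
    (hζ : IsPrimitiveRoot ζ n) (hn : 0 < n) {p : ℤ[X]} (hp : aeval ζ p = 0) :
    cyclotomic n ℤ ∣ p := by
  rw [cyclotomic_eq_minpoly hζ hn]
  exact minpoly.isIntegrallyClosed_dvd (hζ.isIntegral hn) hp

theorem aeval_F_s7 {A : Type*} [CommRing A] (x : A) (N : ℕ) :
    aeval x (F N) =
      ∑ k ∈ range N, (∑ n ∈ range N with n.Prime ∧ Odd n, x ^ (k * n)) ^ 2 := by
  simp only [F, sum_filter, map_sum, map_pow, apply_ite (aeval x), aeval_X, map_zero]

theorem cyclotomic_four_mul_dvd_F_two_mul (N : ℕ) (hN : 0 < N) :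
    Polynomial.cyclotomic (4 * N) ℤ ∣ F (2 * N) := by
  obtain ⟨ζ, hζ⟩ : ∃ ζ : ℂ, IsPrimitiveRoot ζ (2 * (2 * N)) :=
    ⟨_, Complex.isPrimitiveRoot_exp _ (by omega)⟩
  rw [show 4 * N = 2 * (2 * N) by ring]
  refine cyclotomic_dvd_of_aeval_eq_zero hζ (by omega) ?_
  rw [aeval_F_s7]
  refine hζ.sum_range_sq_sum_pow_eq_zero fun n hn => ?_
  rw [mem_filter, mem_range] at hn
  exact ⟨hn.2.2, hn.1⟩
end

section
/- As x → ∞, ∫_{x/log x}^{x−√x} t/log(x−t) dt = x²/(2 log x) + O(x²/log²x). -/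
/-!
On `[x / log x, x - √x]` we have `√x ≤ x - t ≤ x`, so `log (x - t)` lies between `log x / 2` and
`log x`. Replacing it by `log x` gives the main term `∫ t / log x = x² / (2 log x) + O(x² / log² x)`.
The error of the replacement is controlled by `log x - log (x - t) ≤ 2 √x / √(x - t)`; it contributes
`O(x √x / log² x) * ∫ (x - t)^(-1/2) dt = O(x² / log² x)`.
-/

open Asymptotics Filter Real intervalIntegral

theorem Real.log_le_sqrt {x : ℝ} (hx : 0 ≤ x) : log x ≤ √x := by
  rcases hx.eq_or_lt with rfl | hx
  · simp
  set q := √√x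
  have hq : 0 < q := by positivity
  have hlog : log x = 4 * log q := by
    rw [log_sqrt (sqrt_nonneg x), log_sqrt hx.le]; ring
  have hsq : q ^ 2 = √x := sq_sqrt (sqrt_nonneg x)
  nlinarith [log_le_sub_one_of_pos hq, sq_nonneg (q - 2)]

theorem Real.log_sub_log_le_two_mul_sqrt_div {x u : ℝ} (hx : 0 < x) (hu : 0 < u) :
    log x - log u ≤ 2 * (√x / √u) := by
  rw [← log_div hx.ne' hu.ne', ← sqrt_div' _ hu.le, sqrt_eq_rpow]
  have := log_le_rpow_div (div_pos hx hu).le one_half_pos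
  linarith

theorem div_log_sub_div_log_le {x u t : ℝ} (hx : 1 < x) (hu : √x ≤ u) (hux : u ≤ x)
    (htx : t ≤ x) :
    t / log u - t / log x ≤ 4 * x * √x / log x ^ 2 * (1 / √u) := by
  have hL : 0 < log x := log_pos hx
  have hu0 : 0 < u := (sqrt_pos.2 (by linarith)).trans_le hu
  have hlogu : log x / 2 ≤ log u := by
    rw [← log_sqrt (by linarith)]
    exact log_le_log (by positivity) hu
  have hLu : 0 ≤ log x - log u := sub_nonneg.2 (log_le_log hu0 hux)
  calc t / log u - t / log x = t * (log x - log u) / (log u * log x) := by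
        field_simp [show log u ≠ 0 by linarith]
    _ ≤ x * (2 * (√x / √u)) / (log x / 2 * log x) := by
        gcongr
        exact log_sub_log_le_two_mul_sqrt_div (by linarith) hu0
    _ = 4 * x * √x / log x ^ 2 * (1 / √u) := by field_simp; ring

section

variable {x a b : ℝ}

theorem intervalIntegrable_one_div_sqrt_sub (hab : a ≤ b) (hbx : b < x) :
    IntervalIntegrable (fun t => 1 / √(x - t)) MeasureTheory.volume a b := by
  refine (ContinuousOn.div continuousOn_const (by fun_prop) fun t ht => ?_).intervalIntegrable
  rw [Set.uIcc_of_le hab] at ht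
  exact (sqrt_pos.2 (by linarith [ht.2])).ne'

theorem integral_one_div_sqrt_sub (hab : a ≤ b) (hbx : b < x) :
    ∫ t in a..b, 1 / √(x - t) = 2 * √(x - a) - 2 * √(x - b) := by
  rw [integral_eq_sub_of_hasDerivAt (f := fun t => -2 * √(x - t)) (fun t ht => ?_)
    (intervalIntegrable_one_div_sqrt_sub hab hbx)]
  · ring
  rw [Set.uIcc_of_le hab] at ht
  have hpos : 0 < x - t := by linarith [ht.2]
  refine ((((hasDerivAt_id' t).const_sub x).sqrt hpos.ne').const_mul (-2)).congr_deriv ?_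
  field_simp

theorem intervalIntegrable_div_log_sub (hab : a ≤ b) (hbx : b + 1 < x) :
    IntervalIntegrable (fun t => t / log (x - t)) MeasureTheory.volume a b := by
  refine (continuousOn_id.div (continuousOn_log.comp (by fun_prop) fun t ht => ?_)
    fun t ht => ?_).intervalIntegrable_of_Icc hab
  · exact (show 0 < x - t by linarith [ht.2]).ne'
  · exact (log_pos (show 1 < x - t by linarith [ht.2])).ne'

end

section

variable {x : ℝ}

theorem two_le_log_of_exp_two_le (hx : exp 2 ≤ x) : 2 ≤ log x :=
  (le_log_iff_exp_le ((exp_pos 2).trans_le hx)).2 hx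

theorem div_log_le_sub_sqrt_of_exp_two_le (hx : exp 2 ≤ x) : x / log x ≤ x - √x := by
  have hx0 : 0 < x := (exp_pos 2).trans_le hx
  have hL := two_le_log_of_exp_two_le hx
  have hLs := log_le_sqrt hx0.le
  have hss : √x * √x = x := mul_self_sqrt hx0.le
  rw [div_le_iff₀ (by linarith)]
  nlinarith [mul_le_mul_of_nonneg_left hLs (sqrt_nonneg x)]

theorem abs_integral_div_log_sub_le (hx : exp 2 ≤ x) :
    |(∫ t in x / log x..x - √x, t / log x) - x ^ 2 / (2 * log x)| ≤ 2 * (x ^ 2 / log x ^ 2) := by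
  have hx0 : 0 < x := (exp_pos 2).trans_le hx
  have hL := two_le_log_of_exp_two_le hx
  have hLs := log_le_sqrt hx0.le
  rw [integral_div, integral_id]
  generalize log x = L at hL hLs ⊢
  obtain ⟨s, hs0, rfl⟩ : ∃ s, 0 ≤ s ∧ x = s ^ 2 := ⟨√x, sqrt_nonneg x, (sq_sqrt hx0.le).symm⟩
  rw [sqrt_sq hs0] at hLs ⊢
  have hlhs : ((s ^ 2 - s) ^ 2 - (s ^ 2 / L) ^ 2) / 2 / L - (s ^ 2) ^ 2 / (2 * L)
      = (L ^ 2 * s ^ 2 - 2 * L ^ 2 * s ^ 3 - s ^ 4) / (2 * L ^ 3) := by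
    field_simp [show L ≠ 0 by linarith]; ring
  have hrhs : 2 * ((s ^ 2) ^ 2 / L ^ 2) = 4 * L * s ^ 4 / (2 * L ^ 3) := by
    field_simp [show L ≠ 0 by linarith]; ring
  rw [hlhs, hrhs, abs_div, abs_of_pos (by positivity : (0:ℝ) < 2 * L ^ 3),
    div_le_div_iff_of_pos_right (by positivity), abs_le]
  have h := mul_le_mul_of_nonneg_left hLs (by positivity : (0:ℝ) ≤ 2 * L * s ^ 3)
  constructor <;> nlinarith

theorem abs_integral_div_log_sub_sub_le (hx : exp 2 ≤ x) :
    |(∫ t in x / log x..x - √x, t / log (x - t)) - ∫ t in x / log x..x - √x, t / log x|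
      ≤ 8 * (x ^ 2 / log x ^ 2) := by
  have hx0 : 0 < x := (exp_pos 2).trans_le hx
  have hL := two_le_log_of_exp_two_le hx
  have hLs := log_le_sqrt hx0.le
  have hx1 : 1 < x := by linarith [log_le_sub_one_of_pos hx0]
  have hab := div_log_le_sub_sqrt_of_exp_two_le hx
  have ha0 : 0 ≤ x / log x := div_nonneg hx0.le (by linarith)
  have hf := intervalIntegrable_div_log_sub (x := x) hab (by linarith)
  have hg : IntervalIntegrable (fun t => t / log x) MeasureTheory.volume (x / log x) (x - √x) :=
    (continuous_id.div_const _).intervalIntegrable _ _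
  have hnonneg : ∀ t ∈ Set.Icc (x / log x) (x - √x), 0 ≤ t / log (x - t) - t / log x :=
    fun t ⟨hat, htb⟩ => sub_nonneg.2 <| div_le_div_of_nonneg_left (ha0.trans hat)
      (log_pos (by linarith)) (log_le_log (by linarith) (by linarith))
  rw [← integral_sub hf hg, abs_of_nonneg (integral_nonneg hab hnonneg)]
  calc ∫ t in x / log x..x - √x, t / log (x - t) - t / log x
      ≤ ∫ t in x / log x..x - √x, 4 * x * √x / log x ^ 2 * (1 / √(x - t)) :=
        integral_mono_on hab (hf.sub hg)
          ((intervalIntegrable_one_div_sqrt_sub hab (by linarith)).const_mul _)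
          fun t ⟨hat, htb⟩ => div_log_sub_div_log_le hx1 (by linarith) (by linarith) (by linarith)
    _ = 4 * x * √x / log x ^ 2 * (2 * √(x - x / log x) - 2 * √(x - (x - √x))) := by
        rw [integral_const_mul, integral_one_div_sqrt_sub hab (by linarith)]
    _ ≤ 4 * x * √x / log x ^ 2 * (2 * √x) := by
        gcongr
        linarith [sqrt_nonneg (x - (x - √x)), sqrt_le_sqrt (x := x - x / log x) (y := x)
          (by linarith)]
    _ = 8 * (x ^ 2 / log x ^ 2) := by
        linear_combination 8 * x / log x ^ 2 * mul_self_sqrt hx0.le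

end

theorem integral_t_div_log_sub_asymptotic :
    (fun x : ℝ =>
        (∫ t in (x / Real.log x)..(x - Real.sqrt x), t / Real.log (x - t)) -
          x ^ 2 / (2 * Real.log x)) =O[atTop]
      (fun x : ℝ => x ^ 2 / Real.log x ^ 2) := by
  have hnorm : ∀ x : ℝ, ‖x ^ 2 / log x ^ 2‖ = x ^ 2 / log x ^ 2 := fun x =>
    norm_of_nonneg (by positivity)
  have herror : (fun x : ℝ => (∫ t in x / log x..x - √x, t / log (x - t)) -
      ∫ t in x / log x..x - √x, t / log x) =O[atTop] fun x => x ^ 2 / log x ^ 2 :=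
    IsBigO.of_bound 8 <| (eventually_ge_atTop (exp 2)).mono fun x hx => by
      rw [hnorm]; exact abs_integral_div_log_sub_sub_le hx
  have hmain : (fun x : ℝ => (∫ t in x / log x..x - √x, t / log x) - x ^ 2 / (2 * log x))
      =O[atTop] fun x => x ^ 2 / log x ^ 2 :=
    IsBigO.of_bound 2 <| (eventually_ge_atTop (exp 2)).mono fun x hx => by
      rw [hnorm]; exact abs_integral_div_log_sub_le hx
  exact (herror.add hmain).congr (fun x => by ring) fun _ => rfl
end

section
/- For x ≥ 3, Q(x) = ∑_{x/log x ≤ p ≤ x−√x} π(x−p) + O(x²/log³x), where the sum is over primes p in the indicated range, π is the prime counting function, and the implied constant is absolute. -/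
open Classical

/-- `Q x` is the number of ordered pairs `(p, q)` of primes with `p + q ≤ x`. -/
noncomputable def Q (x : ℝ) : ℕ :=
  {pq : ℕ × ℕ | pq.1.Prime ∧ pq.2.Prime ∧ (pq.1 : ℝ) + pq.2 ≤ x}.ncard

/-!
Counting pairs by their first entry gives exactly `Q x = ∑_{p ≤ x} π(x - p)`. The primes left
out of the sum are either `p < x / log x`, contributing at most `π(x / log x) π(x) ≪ x² / log³ x`
by Chebyshev's bound `π(t) ≪ t / log t`, or `p > x - √x`: at most `√x + 1` primes, each
contributing `π(x - p) ≤ √x`, for a total `O(x) = O(x² / log³ x)`.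
-/

open Nat hiding log
open Finset Real

theorem Finset.sum_filter_le_sum_filter_add_sum_filter {ι M : Type*} [AddCommMonoid M]
    [PartialOrder M] [CanonicallyOrderedAdd M] [IsOrderedAddMonoid M] {s : Finset ι}
    {p q r : ι → Prop} [DecidablePred p] [DecidablePred q] [DecidablePred r]
    (h : ∀ i ∈ s, p i → q i ∨ r i) (f : ι → M) :
    ∑ i ∈ s with p i, f i ≤ ∑ i ∈ s with q i, f i + ∑ i ∈ s with r i, f i := by
  classical
  calc ∑ i ∈ s with p i, f i ≤ ∑ i ∈ {i ∈ s | q i} ∪ {i ∈ s | r i}, f i := by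
        refine sum_le_sum_of_subset fun i hi => ?_
        rw [mem_filter] at hi
        rw [← filter_or, mem_filter]
        exact ⟨hi.1, h i hi.1 hi.2⟩
    _ ≤ ∑ i ∈ {i ∈ s | q i} ∪ {i ∈ s | r i}, f i + ∑ i ∈ {i ∈ s | q i} ∩ {i ∈ s | r i}, f i :=
        le_self_add
    _ = _ := sum_union_inter

theorem Nat.primeCounting_le_self (n : ℕ) : primeCounting n ≤ n := by
  rw [← primesLE_card_eq_primeCounting, primesLE_eq_filter_Ioc_zero]
  exact (card_filter_le _ _).trans (by simp)

theorem Nat.floor_sub_natCast_le {R : Type*} [Ring R] [LinearOrder R] [IsStrictOrderedRing R]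
    [FloorSemiring R] (a : R) (n : ℕ) : ⌊a - n⌋₊ ≤ ⌊a⌋₊ - n := by
  rcases le_or_gt (n : R) a with h | h
  · refine Nat.le_sub_of_add_le (Nat.le_floor ?_)
    push_cast
    exact le_sub_iff_add_le.1 (Nat.floor_le (sub_nonneg.2 h))
  · rw [Nat.floor_eq_zero.2 ((sub_neg.2 h).trans zero_lt_one)]
    exact Nat.zero_le _

theorem Real.log_le_half_self {t : ℝ} (ht : 0 ≤ t) : log t ≤ t / 2 := by
  rcases ht.eq_or_lt with rfl | ht
  · simp
  have h := log_le_sub_one_of_pos (sqrt_pos.2 ht)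
  rw [log_sqrt ht.le] at h
  nlinarith [sq_nonneg (√t - 2), sq_sqrt ht.le]

theorem Real.log_four_lt : log 4 < 1.39 := by
  rw [show (4 : ℝ) = 2 ^ 2 by norm_num, Real.log_pow]
  linarith [log_two_lt_d9]

theorem Real.one_le_log_of_three_le {x : ℝ} (hx : 3 ≤ x) : 1 ≤ log x := by
  rw [le_log_iff_exp_le (by linarith)]
  linarith [exp_one_lt_d9]

theorem Real.log_pow_three_le {x : ℝ} (hx : 1 ≤ x) : log x ^ 3 ≤ 27 * x := by
  have h := log_le_rpow_div (x := x) (by linarith) (by norm_num : (0 : ℝ) < 1 / 3)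
  have h3 : (x ^ (1 / 3 : ℝ)) ^ 3 = x := by
    rw [← rpow_natCast, ← rpow_mul (by linarith)]; norm_num
  calc log x ^ 3 ≤ (x ^ (1 / 3 : ℝ) / (1 / 3)) ^ 3 := pow_le_pow_left₀ (log_nonneg hx) h 3
    _ = 27 * x := by rw [div_pow, h3]; ring

theorem Real.half_log_le_log_div_log {x : ℝ} (hx : 1 < x) : log x / 2 ≤ log (x / log x) := by
  have hL := log_pos hx
  rw [log_div (by positivity) hL.ne']
  linarith [log_le_half_self hL.le]

theorem Real.self_le_mul_sq_div_log_pow_three {x : ℝ} (hx : 1 < x) :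
    x ≤ 27 * (x ^ 2 / log x ^ 3) := by
  have hL := log_pos hx
  rw [mul_div_assoc', le_div_iff₀ (by positivity)]
  nlinarith [log_pow_three_le hx.le]

theorem Chebyshev.primeCounting_floor_mul_log_le {x : ℝ} (hx : 1 ≤ x) :
    primeCounting ⌊x⌋₊ * log x ≤ 5 * x := by
  have hx0 : 0 ≤ x := by linarith
  set P := primesLE ⌊x⌋₊
  set m := ⌊√x⌋₊
  have hsmall : (#{p ∈ P | p ≤ m} : ℝ) ≤ √x := by
    have hsub : {p ∈ P | p ≤ m} ⊆ primesLE m := fun p hp => by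
      simp only [P, mem_filter, mem_primesLE] at hp ⊢
      exact ⟨hp.2, hp.1.2⟩
    calc (#{p ∈ P | p ≤ m} : ℝ) ≤ primeCounting m := by
          rw [← primesLE_card_eq_primeCounting]; exact_mod_cast card_le_card hsub
      _ ≤ m := by exact_mod_cast primeCounting_le_self m
      _ ≤ √x := Nat.floor_le (sqrt_nonneg x)
  -- every prime above `√x` contributes at least `log x / 2` to `θ x`
  have hlarge : (#{p ∈ P | ¬ p ≤ m} : ℝ) * (log x / 2) ≤ log 4 * x := by
    calc (#{p ∈ P | ¬ p ≤ m} : ℝ) * (log x / 2)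
        ≤ ∑ p ∈ P with ¬ p ≤ m, log p := by
          rw [← nsmul_eq_mul]
          refine card_nsmul_le_sum _ _ _ fun p hp => ?_
          rw [mem_filter, not_le, Nat.floor_lt (sqrt_nonneg x)] at hp
          rw [← log_sqrt hx0]
          exact log_le_log (by positivity) hp.2.le
      _ ≤ ∑ p ∈ P, log p := sum_le_sum_of_subset_of_nonneg (filter_subset _ _)
          fun p _ _ => log_natCast_nonneg p
      _ = theta x := (theta_eq_sum_primesLE x).symm
      _ ≤ log 4 * x := theta_le_log4_mul_x hx0
  have hsqrt : √x * log x ≤ 2 * x := by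
    have h := log_le_self (sqrt_nonneg x)
    rw [log_sqrt hx0] at h
    nlinarith [mul_self_sqrt hx0, sqrt_nonneg x]
  have hcard : (primeCounting ⌊x⌋₊ : ℝ) = #{p ∈ P | p ≤ m} + #{p ∈ P | ¬ p ≤ m} := by
    rw [← primesLE_card_eq_primeCounting, ← card_filter_add_card_filter_not (· ≤ m)]
    push_cast; rfl
  rw [hcard]
  nlinarith [log_four_lt, mul_le_mul_of_nonneg_right hsmall (log_nonneg hx)]

theorem Chebyshev.primeCounting_floor_div_log_mul_log_sq_le {x : ℝ} (hx : 3 ≤ x) :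
    primeCounting ⌊x / log x⌋₊ * log x ^ 2 ≤ 10 * x := by
  have hL := one_le_log_of_three_le hx
  have hLx : log x ≤ x := log_le_self (by linarith)
  have hy : 1 ≤ x / log x := (one_le_div (by linarith)).2 hLx
  have h := primeCounting_floor_mul_log_le hy
  have hlog := half_log_le_log_div_log (by linarith : 1 < x)
  have hπ : (0 : ℝ) ≤ primeCounting ⌊x / log x⌋₊ := by positivity
  have hmul : x / log x * log x = x := div_mul_cancel₀ x (by linarith)
  nlinarith [mul_le_mul_of_nonneg_left hlog hπ]

theorem Chebyshev.primeCounting_floor_div_log_mul_primeCounting_floor_le {x : ℝ} (hx : 3 ≤ x) :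
    (primeCounting ⌊x / log x⌋₊ * primeCounting ⌊x⌋₊ : ℝ) ≤ 50 * (x ^ 2 / log x ^ 3) := by
  have hL := one_le_log_of_three_le hx
  have h₁ := primeCounting_floor_div_log_mul_log_sq_le hx
  have h₂ := primeCounting_floor_mul_log_le (by linarith : 1 ≤ x)
  rw [mul_div_assoc', le_div_iff₀ (by positivity)]
  calc (primeCounting ⌊x / log x⌋₊ * primeCounting ⌊x⌋₊ : ℝ) * log x ^ 3
      = (primeCounting ⌊x / log x⌋₊ * log x ^ 2) * (primeCounting ⌊x⌋₊ * log x) := by ring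
    _ ≤ (10 * x) * (5 * x) := mul_le_mul h₁ h₂ (by positivity) (by positivity)
    _ = 50 * x ^ 2 := by ring

theorem filter_primesLE_floor_add_le {x : ℝ} {p : ℕ} (hp : (p : ℝ) ≤ x) :
    (primesLE ⌊x⌋₊).filter (fun q : ℕ => (p : ℝ) + q ≤ x) = primesLE ⌊x - p⌋₊ := by
  ext q
  simp only [mem_filter, mem_primesLE]
  rw [Nat.le_floor_iff (by linarith), Nat.le_floor_iff (by linarith)]
  constructor
  · rintro ⟨⟨-, hq⟩, h⟩; exact ⟨by linarith, hq⟩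
  · rintro ⟨h, hq⟩; exact ⟨⟨by linarith [(p.cast_nonneg : (0:ℝ) ≤ p)], hq⟩, by linarith⟩

theorem Q_eq_sum_primesLE (x : ℝ) :
    Q x = ∑ p ∈ primesLE ⌊x⌋₊, primeCounting ⌊x - p⌋₊ := by
  have hset : {pq : ℕ × ℕ | pq.1.Prime ∧ pq.2.Prime ∧ (pq.1 : ℝ) + pq.2 ≤ x} =
      ↑{pq ∈ primesLE ⌊x⌋₊ ×ˢ primesLE ⌊x⌋₊ | (pq.1 : ℝ) + pq.2 ≤ x} := by
    ext ⟨p, q⟩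
    simp only [Set.mem_ofPred_eq, coe_filter, mem_product, mem_primesLE]
    have hp : (0 : ℝ) ≤ p := p.cast_nonneg
    have hq : (0 : ℝ) ≤ q := q.cast_nonneg
    constructor
    · rintro ⟨hp', hq', h⟩
      exact ⟨⟨⟨Nat.le_floor (by linarith), hp'⟩, Nat.le_floor (by linarith), hq'⟩, h⟩
    · rintro ⟨⟨⟨-, hp'⟩, -, hq'⟩, h⟩
      exact ⟨hp', hq', h⟩
  rw [Q, hset, Set.ncard_coe_finset, card_filter, sum_product]
  refine sum_congr rfl fun p hp => ?_
  rw [← card_filter, filter_primesLE_floor_add_le, primesLE_card_eq_primeCounting]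
  exact (Nat.le_floor_iff' (prime_of_mem_primesLE hp).ne_zero).1 (le_of_mem_primesLE hp)

theorem sum_filter_le_primeCounting_floor_sub_le (x : ℝ) (m : ℕ) :
    ∑ p ∈ primesLE ⌊x⌋₊ with p ≤ m, primeCounting ⌊x - p⌋₊ ≤
      primeCounting m * primeCounting ⌊x⌋₊ := by
  have hcard : #{p ∈ primesLE ⌊x⌋₊ | p ≤ m} ≤ primeCounting m := by
    rw [← primesLE_card_eq_primeCounting]
    refine card_le_card fun p hp => ?_
    rw [mem_filter, mem_primesLE] at hp
    exact mem_primesLE.2 ⟨hp.2, hp.1.2⟩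
  calc ∑ p ∈ primesLE ⌊x⌋₊ with p ≤ m, primeCounting ⌊x - p⌋₊
      ≤ ∑ p ∈ primesLE ⌊x⌋₊ with p ≤ m, primeCounting ⌊x⌋₊ :=
        sum_le_sum fun p _ => monotone_primeCounting <| Nat.floor_le_floor <|
          sub_le_self x p.cast_nonneg
    _ ≤ primeCounting m * primeCounting ⌊x⌋₊ := by
        rw [sum_const, smul_eq_mul]
        exact Nat.mul_le_mul_right _ hcard

theorem sum_filter_lt_primeCounting_floor_sub_le (x : ℝ) (k : ℕ) :
    ∑ p ∈ primesLE ⌊x⌋₊ with k < p, primeCounting ⌊x - p⌋₊ ≤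
      (⌊x⌋₊ - k) * (⌊x⌋₊ - k) := by
  have hcard : #{p ∈ primesLE ⌊x⌋₊ | k < p} ≤ ⌊x⌋₊ - k := by
    rw [← Nat.card_Ioc]
    refine card_le_card fun p hp => ?_
    rw [mem_filter, mem_primesLE] at hp
    exact mem_Ioc.2 ⟨hp.2, hp.1.1⟩
  have hterm : ∀ p ∈ {p ∈ primesLE ⌊x⌋₊ | k < p}, primeCounting ⌊x - p⌋₊ ≤ ⌊x⌋₊ - k := by
    intro p hp
    rw [mem_filter] at hp
    have hfloor := Nat.floor_sub_natCast_le x p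
    exact (primeCounting_le_self _).trans (by omega)
  calc ∑ p ∈ primesLE ⌊x⌋₊ with k < p, primeCounting ⌊x - p⌋₊
      ≤ #{p ∈ primesLE ⌊x⌋₊ | k < p} * (⌊x⌋₊ - k) := by
        rw [← smul_eq_mul]; exact sum_le_card_nsmul _ _ _ hterm
    _ ≤ (⌊x⌋₊ - k) * (⌊x⌋₊ - k) := Nat.mul_le_mul_right _ hcard

theorem Nat.cast_floor_sub_floor_sub_le {x h : ℝ} (hh : 0 ≤ h) :
    ((⌊x⌋₊ - ⌊x - h⌋₊ : ℕ) : ℝ) ≤ h + 1 := by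
  rcases le_total ⌊x⌋₊ ⌊x - h⌋₊ with hle | hle
  · rw [Nat.sub_eq_zero_of_le hle, Nat.cast_zero]
    linarith
  rcases lt_or_ge x 0 with hx | hx
  · simp [Nat.floor_of_nonpos hx.le]
    linarith
  rw [Nat.cast_sub hle]
  linarith [Nat.floor_le hx, Nat.sub_one_lt_floor (x - h)]

theorem sq_floor_sub_floor_sub_sqrt_le {x : ℝ} (hx : 1 ≤ x) :
    ((⌊x⌋₊ - ⌊x - √x⌋₊ : ℕ) : ℝ) ^ 2 ≤ 4 * x := by
  have h := Nat.cast_floor_sub_floor_sub_le (x := x) (sqrt_nonneg x)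
  have h1 : 1 ≤ √x := one_le_sqrt.2 hx
  calc ((⌊x⌋₊ - ⌊x - √x⌋₊ : ℕ) : ℝ) ^ 2 ≤ (√x + 1) ^ 2 := pow_le_pow_left₀ (by positivity) h 2
    _ ≤ 4 * x := by nlinarith [sq_sqrt (by linarith : 0 ≤ x)]

theorem Q_eq_sum_primeCounting :
    ∃ C : ℝ, 0 < C ∧ ∀ x : ℝ, 3 ≤ x →
      |(Q x : ℝ) -
          ∑ p ∈ (Finset.range (⌊x⌋₊ + 1)).filter
            (fun p : ℕ => p.Prime ∧ x / Real.log x ≤ (p : ℝ) ∧ (p : ℝ) ≤ x - Real.sqrt x),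
            (Nat.primeCounting ⌊x - (p : ℝ)⌋₊ : ℝ)| ≤
        C * (x ^ 2 / Real.log x ^ 3) := by
  refine ⟨158, by norm_num, fun x hx => ?_⟩
  have hexcept : ∑ p ∈ (primesLE ⌊x⌋₊).filter (fun p : ℕ => ¬ (x / log x ≤ p ∧ p ≤ x - √x)),
      primeCounting ⌊x - p⌋₊ ≤ primeCounting ⌊x / log x⌋₊ * primeCounting ⌊x⌋₊ +
        (⌊x⌋₊ - ⌊x - √x⌋₊) * (⌊x⌋₊ - ⌊x - √x⌋₊) := by
    refine (sum_filter_le_sum_filter_add_sum_filter (fun p hp hA => ?_) _).trans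
      (Nat.add_le_add (sum_filter_le_primeCounting_floor_sub_le x _)
        (sum_filter_lt_primeCounting_floor_sub_le x _))
    rw [not_and_or, not_le, not_le] at hA
    exact hA.imp (fun h => Nat.le_floor h.le)
      (fun h => (Nat.floor_lt' (prime_of_mem_primesLE hp).ne_zero).2 h)
  rw [← filter_filter, ← primesLE_eq_filter_range, Q_eq_sum_primesLE,
    ← sum_filter_add_sum_filter_not _ (fun p : ℕ => x / log x ≤ p ∧ p ≤ x - √x)]
  push_cast
  rw [add_sub_cancel_left, abs_of_nonneg (sum_nonneg fun _ _ => Nat.cast_nonneg _)]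
  calc _ ≤ (primeCounting ⌊x / log x⌋₊ * primeCounting ⌊x⌋₊ : ℝ) +
        ((⌊x⌋₊ - ⌊x - √x⌋₊ : ℕ) : ℝ) ^ 2 := by rw [sq]; exact_mod_cast hexcept
    _ ≤ 50 * (x ^ 2 / log x ^ 3) + 4 * (27 * (x ^ 2 / log x ^ 3)) := by
        refine add_le_add (Chebyshev.primeCounting_floor_div_log_mul_primeCounting_floor_le hx)
          ((sq_floor_sub_floor_sub_sqrt_le (by linarith)).trans ?_)
        gcongr
        exact self_le_mul_sq_div_log_pow_three (by linarith)
    _ = 158 * (x ^ 2 / log x ^ 3) := by ring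
end
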